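/- arXiv:2405.07818 — 6 statements merged into one kernel-verified Lean document; each statement's English description precedes it below -/
import Mathlib

section
/- For every integer m ≥ 2 and all real numbers r, R with 0 < r < R, one has (sinh r / sinh R)^m ≤ (∫₀^r sinh^{m−1}(η) dη) / (∫₀^R sinh^{m−1}(η) dη) ≤ (sinh r / sinh R)^{m−1}. -/
/-!
Both bounds are instances of one Chebyshev-type inequality: for a weight `w ≥ 0` and a monotone
`g`, the `w`-average of `g` over `[0, r]` is at most its `w`-average over `[0, R]`.
With `w = sinh^(m-1)` and `g = cosh`, where `∫₀^t w g = sinh^m t / m`, this gives the lower bound;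
with `w = sinh^(m-2) cosh` and `g = tanh`, where `w g = sinh^(m-1)` and
`∫₀^t w = sinh^(m-1) t / (m-1)`, it gives the upper bound.
-/

open Real MeasureTheory intervalIntegral Set

lemma integral_mul_mul_integral_le_of_monotoneOn {w g : ℝ → ℝ} {a r R : ℝ}
    (har : a ≤ r) (hrR : r ≤ R) (hw : IntervalIntegrable w volume a R)
    (hwg : IntervalIntegrable (fun x ↦ w x * g x) volume a R)
    (hw0 : ∀ x ∈ Icc a R, 0 ≤ w x) (hg : MonotoneOn g (Icc a R)) :
    (∫ x in a..r, w x * g x) * (∫ x in a..R, w x)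
      ≤ (∫ x in a..r, w x) * (∫ x in a..R, w x * g x) := by
  have hr : r ∈ uIcc a R := mem_uIcc_of_le har hrR
  have hsub₁ : uIcc a r ⊆ uIcc a R := uIcc_subset_uIcc left_mem_uIcc hr
  have hsub₂ : uIcc r R ⊆ uIcc a R := uIcc_subset_uIcc hr right_mem_uIcc
  rw [← integral_add_adjacent_intervals (hw.mono_set hsub₁) (hw.mono_set hsub₂),
    ← integral_add_adjacent_intervals (hwg.mono_set hsub₁) (hwg.mono_set hsub₂)]
  have hA : 0 ≤ ∫ x in a..r, w x :=
    integral_nonneg har fun x hx ↦ hw0 x ⟨hx.1, hx.2.trans hrR⟩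
  have hB : 0 ≤ ∫ x in r..R, w x :=
    integral_nonneg hrR fun x hx ↦ hw0 x ⟨har.trans hx.1, hx.2⟩
  have hAg : ∫ x in a..r, w x * g x ≤ g r * ∫ x in a..r, w x := by
    rw [← intervalIntegral.integral_const_mul]
    refine integral_mono_on har (hwg.mono_set hsub₁) ((hw.mono_set hsub₁).const_mul _) ?_
    intro x hx
    have hx' : x ∈ Icc a R := ⟨hx.1, hx.2.trans hrR⟩
    rw [mul_comm (g r)]
    exact mul_le_mul_of_nonneg_left (hg hx' ⟨har, hrR⟩ hx.2) (hw0 x hx')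
  have hBg : g r * ∫ x in r..R, w x ≤ ∫ x in r..R, w x * g x := by
    rw [← intervalIntegral.integral_const_mul]
    refine integral_mono_on hrR ((hw.mono_set hsub₂).const_mul _) (hwg.mono_set hsub₂) ?_
    intro x hx
    have hx' : x ∈ Icc a R := ⟨har.trans hx.1, hx.2⟩
    rw [mul_comm (g r)]
    exact mul_le_mul_of_nonneg_left (hg ⟨har, hrR⟩ hx' hx.1) (hw0 x hx')
  nlinarith [mul_le_mul_of_nonneg_right hAg hB, mul_le_mul_of_nonneg_left hBg hA]

lemma integral_sinh_pow_mul_cosh (n : ℕ) (t : ℝ) :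
    ∫ x in (0 : ℝ)..t, sinh x ^ n * cosh x = sinh t ^ (n + 1) / (n + 1) := by
  have := integral_comp_mul_deriv (a := 0) (b := t) (g := fun u ↦ u ^ n)
    (fun x _ ↦ hasDerivAt_sinh x) continuous_cosh.continuousOn (continuous_pow n)
  simpa [integral_pow] using this

lemma integral_sinh_pow_pos (n : ℕ) {t : ℝ} (ht : 0 < t) :
    0 < ∫ x in (0 : ℝ)..t, sinh x ^ n :=
  intervalIntegral_pos_of_pos_on ((continuous_sinh.pow n).intervalIntegrable 0 t)
    (fun _ hx ↦ pow_pos (sinh_pos_iff.2 hx.1) n) ht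

lemma tanh_monotone : Monotone tanh := fun x y hxy ↦ by
  have hmem (z : ℝ) : tanh z ∈ Ioo (-1) 1 := ⟨neg_one_lt_tanh z, tanh_lt_one z⟩
  rwa [← artanh_le_artanh_iff (hmem x) (hmem y), artanh_tanh, artanh_tanh]

section

variable (n : ℕ) {r R : ℝ}

lemma sinh_pow_succ_mul_integral_sinh_pow_le (hr : 0 ≤ r) (hrR : r ≤ R) :
    sinh r ^ (n + 1) * ∫ x in (0 : ℝ)..R, sinh x ^ n
      ≤ (∫ x in (0 : ℝ)..r, sinh x ^ n) * sinh R ^ (n + 1) := by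
  have h := integral_mul_mul_integral_le_of_monotoneOn (w := fun x ↦ sinh x ^ n) hr hrR
    ((continuous_sinh.pow n).intervalIntegrable 0 R)
    (((continuous_sinh.pow n).mul continuous_cosh).intervalIntegrable 0 R)
    (fun x hx ↦ pow_nonneg (sinh_nonneg_iff.2 hx.1) n)
    (cosh_strictMonoOn.monotoneOn.mono Icc_subset_Ici_self)
  rw [integral_sinh_pow_mul_cosh, integral_sinh_pow_mul_cosh] at h
  have hn : (0 : ℝ) < n + 1 := by positivity
  rwa [div_mul_eq_mul_div, mul_div_assoc', div_le_div_iff_of_pos_right hn] at h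

lemma integral_sinh_pow_succ_mul_le (hr : 0 ≤ r) (hrR : r ≤ R) :
    (∫ x in (0 : ℝ)..r, sinh x ^ (n + 1)) * sinh R ^ (n + 1)
      ≤ sinh r ^ (n + 1) * ∫ x in (0 : ℝ)..R, sinh x ^ (n + 1) := by
  have hwg : (fun x ↦ sinh x ^ n * cosh x * tanh x) = fun x ↦ sinh x ^ (n + 1) := by
    ext x
    rw [tanh_eq_sinh_div_cosh, mul_assoc, mul_div_cancel₀ _ (cosh_pos x).ne', pow_succ]
  have h := integral_mul_mul_integral_le_of_monotoneOn (w := fun x ↦ sinh x ^ n * cosh x)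
    hr hrR (((continuous_sinh.pow n).mul continuous_cosh).intervalIntegrable 0 R)
    (hwg ▸ (continuous_sinh.pow (n + 1)).intervalIntegrable 0 R)
    (fun x hx ↦ mul_nonneg (pow_nonneg (sinh_nonneg_iff.2 hx.1) n) (cosh_pos x).le)
    (tanh_monotone.monotoneOn _)
  rw [hwg, integral_sinh_pow_mul_cosh, integral_sinh_pow_mul_cosh] at h
  have hn : (0 : ℝ) < n + 1 := by positivity
  rwa [div_mul_eq_mul_div, mul_div_assoc', div_le_div_iff_of_pos_right hn] at h

end

/-- Cohn–Zhao volume-ratio inequality in integral form: for `0 < r < R`,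
`(sinh r / sinh R)^m ≤ (∫₀^r sinh^{m-1}) / (∫₀^R sinh^{m-1}) ≤ (sinh r / sinh R)^{m-1}`. -/
theorem stmt_1 (m : ℕ) (hm : 2 ≤ m) (r R : ℝ) (hr : 0 < r) (hrR : r < R) :
    (Real.sinh r / Real.sinh R) ^ m
      ≤ (∫ η in (0:ℝ)..r, Real.sinh η ^ (m - 1)) / (∫ η in (0:ℝ)..R, Real.sinh η ^ (m - 1)) ∧
    (∫ η in (0:ℝ)..r, Real.sinh η ^ (m - 1)) / (∫ η in (0:ℝ)..R, Real.sinh η ^ (m - 1))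
      ≤ (Real.sinh r / Real.sinh R) ^ (m - 1) := by
  obtain ⟨n, rfl⟩ : ∃ n, m = n + 2 := ⟨m - 2, by omega⟩
  rw [show n + 2 - 1 = n + 1 by omega]
  have hR : 0 < R := hr.trans hrR
  have hsinhR : 0 < sinh R := sinh_pos_iff.2 hR
  have hintR := integral_sinh_pow_pos (n + 1) hR
  constructor
  · rw [div_pow, div_le_div_iff₀ (pow_pos hsinhR _) hintR]
    exact sinh_pow_succ_mul_integral_sinh_pow_le (n + 1) hr.le hrR.le
  · rw [div_pow, div_le_div_iff₀ hintR (pow_pos hsinhR _)]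
    exact integral_sinh_pow_succ_mul_le n hr.le hrR.le
end

section
/- There exists a constant C > 0 such that for every integer m ≥ 3 and every real r > 0, 1 − C·m·e^{−r} ≤ (m−1)·2^{m−1}·e^{−(m−1)r} · ∫₀^r sinh^{m−1}(η) dη ≤ 1. -/
open Real MeasureTheory

theorem pow_sub_pow_le_aux (a c : ℝ) (h0 : 0 ≤ c) (h : c ≤ a) (n : ℕ) :
    a ^ (n+1) - c ^ (n+1) ≤ (n+1) * a ^ n * (a - c) := by
  induction n with
  | zero => simp
  | succ n ih =>
    have ha : 0 ≤ a := h0.trans h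
    have hc : c ^ (n+1) ≤ a ^ (n+1) := pow_le_pow_left₀ h0 h _
    have heq : a ^ (n+2) - c ^ (n+2) = a * (a^(n+1) - c^(n+1)) + c^(n+1) * (a - c) := by ring
    have h1 : a * (a^(n+1) - c^(n+1)) ≤ a * ((n+1) * a^n * (a-c)) :=
      mul_le_mul_of_nonneg_left ih ha
    have h2 : c^(n+1) * (a - c) ≤ a^(n+1) * (a - c) :=
      mul_le_mul_of_nonneg_right hc (by linarith)
    have key : a * (((n:ℝ)+1) * a^n * (a-c)) + a^(n+1)*(a-c) = ((n:ℝ)+1+1) * a^(n+1) * (a-c) := by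
      ring
    push_cast at h1 ⊢
    linarith

theorem integral_exp_mul_aux (c r : ℝ) (hc : c ≠ 0) :
    ∫ η in (0:ℝ)..r, Real.exp (c * η) = (Real.exp (c * r) - 1) / c := by
  rw [intervalIntegral.integral_comp_mul_left (fun x => Real.exp x) hc]
  simp [integral_exp, mul_comm, div_eq_inv_mul]

set_option maxHeartbeats 1000000 in
/-- `μ_m(B_r) = (1 + O(m e^{-r})) e^{(m-1)r} / ((m-1) 2^{m-1}) · vol(S^{m-1})`, in the form
`1 - C m e^{-r} ≤ (m-1) 2^{m-1} e^{-(m-1)r} ∫₀^r sinh^{m-1}(η) dη ≤ 1`. -/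
theorem stmt_2 :
    ∃ C : ℝ, 0 < C ∧ ∀ m : ℕ, 3 ≤ m → ∀ r : ℝ, 0 < r →
      1 - C * (m : ℝ) * Real.exp (-r)
          ≤ ((m : ℝ) - 1) * 2 ^ (m - 1) * Real.exp (-(((m : ℝ) - 1) * r)) *
            ∫ η in (0:ℝ)..r, Real.sinh η ^ (m - 1) ∧
      ((m : ℝ) - 1) * 2 ^ (m - 1) * Real.exp (-(((m : ℝ) - 1) * r)) *
            (∫ η in (0:ℝ)..r, Real.sinh η ^ (m - 1)) ≤ 1 := by
  refine ⟨4, by norm_num, ?_⟩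
  intro m hm r hr
  set n : ℕ := m - 1 with hn
  have hn2 : 2 ≤ n := by omega
  have hmn : m = n + 1 := by omega
  have hcast : ((m : ℝ) - 1) = (n : ℝ) := by rw [hmn]; push_cast; ring
  set N : ℝ := (n : ℝ) with hNdef
  have hN2 : (2:ℝ) ≤ N := by rw [hNdef]; exact_mod_cast hn2
  have hN0 : (0:ℝ) < N := by linarith
  have h2n0 : (0:ℝ) < 2 ^ n := by positivity
  have hmc : (m : ℝ) = N + 1 := by rw [hmn]; push_cast; ring
  rw [hcast, hmc]
  -- pointwise bounds
  have hsinh_ub : ∀ η ∈ Set.Icc (0:ℝ) r,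
      Real.sinh η ^ n ≤ Real.exp (N * η) / 2 ^ n := by
    intro η hη
    have h0 : 0 ≤ Real.sinh η := Real.sinh_nonneg_iff.mpr hη.1
    have h1 : Real.sinh η ≤ Real.exp η / 2 := by
      rw [Real.sinh_eq]; have := Real.exp_pos (-η); linarith
    calc Real.sinh η ^ n ≤ (Real.exp η / 2) ^ n := pow_le_pow_left₀ h0 h1 n
      _ = Real.exp (N * η) / 2 ^ n := by
          rw [div_pow, hNdef, Real.exp_nat_mul]
  have hsinh_lb : ∀ η ∈ Set.Icc (0:ℝ) r,
      (Real.exp (N * η) - N * Real.exp ((N - 2) * η)) / 2 ^ n ≤ Real.sinh η ^ n := by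
    intro η hη
    have h0 : 0 ≤ Real.sinh η := Real.sinh_nonneg_iff.mpr hη.1
    have hc2 : 2 * Real.sinh η ≤ Real.exp η := by
      rw [Real.sinh_eq]; have := Real.exp_pos (-η); linarith
    obtain ⟨p, hp⟩ : ∃ p, n = p + 1 := ⟨n - 1, by omega⟩
    have key := pow_sub_pow_le_aux (Real.exp η) (2 * Real.sinh η) (by positivity) hc2 p
    have e1 : Real.exp η ^ (p+1) = Real.exp (N * η) := by
      rw [hNdef, Real.exp_nat_mul, hp]
    have e2 : ((p:ℝ)+1) = N := by rw [hNdef, hp]; push_cast; ring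
    have e3 : Real.exp η ^ p * (Real.exp η - 2 * Real.sinh η) = Real.exp ((N - 2) * η) := by
      have hb : Real.exp η - 2 * Real.sinh η = Real.exp (-η) := by rw [Real.sinh_eq]; ring
      rw [hb, ← Real.exp_nat_mul, ← Real.exp_add]
      congr 1
      have hpN : (p:ℝ) = N - 1 := by rw [← e2]; ring
      rw [hpN]; ring
    have e4 : (2 * Real.sinh η) ^ (p+1) = 2 ^ n * Real.sinh η ^ n := by
      rw [hp, mul_pow]
    rw [e1, e2, e4, mul_assoc, e3] at key
    rw [div_le_iff₀ h2n0]
    linarith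
  -- integrability
  have cexp1 : Continuous fun η : ℝ => Real.exp (N * η) :=
    Real.continuous_exp.comp (continuous_const.mul continuous_id)
  have cexp2 : Continuous fun η : ℝ => Real.exp ((N - 2) * η) :=
    Real.continuous_exp.comp (continuous_const.mul continuous_id)
  have int_s : IntervalIntegrable (fun η => Real.sinh η ^ n) volume 0 r :=
    (Real.continuous_sinh.pow n).intervalIntegrable _ _
  have int_u : IntervalIntegrable (fun η => Real.exp (N * η) / 2 ^ n) volume 0 r :=
    (cexp1.div_const _).intervalIntegrable _ _
  have int_l : IntervalIntegrable
      (fun η => (Real.exp (N * η) - N * Real.exp ((N - 2) * η)) / 2 ^ n) volume 0 r :=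
    ((cexp1.sub (continuous_const.mul cexp2)).div_const _).intervalIntegrable _ _
  set I : ℝ := ∫ η in (0:ℝ)..r, Real.sinh η ^ n with hI
  set En : ℝ := Real.exp (N * r) with hEn
  set A : ℝ := Real.exp (-(N * r)) with hA
  have hA0 : 0 < A := Real.exp_pos _
  have hAEn : A * En = 1 := by rw [hA, hEn, ← Real.exp_add]; simp
  set J : ℝ := ∫ η in (0:ℝ)..r, Real.exp ((N - 2) * η) with hJ
  -- integral bounds
  have hIub : I ≤ ((En - 1) / N) / 2 ^ n := by
    have h1 : ∫ η in (0:ℝ)..r, Real.exp (N * η) / 2 ^ n = ((En - 1) / N) / 2 ^ n := by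
      rw [intervalIntegral.integral_div, integral_exp_mul_aux N r hN0.ne']
    rw [hI, ← h1]
    exact intervalIntegral.integral_mono_on hr.le int_s int_u hsinh_ub
  have hIlb : ((En - 1) / N - N * J) / 2 ^ n ≤ I := by
    have int_a : IntervalIntegrable (fun η => Real.exp (N * η)) volume 0 r :=
      cexp1.intervalIntegrable _ _
    have int_b : IntervalIntegrable (fun η => N * Real.exp ((N - 2) * η)) volume 0 r :=
      (continuous_const.mul cexp2).intervalIntegrable _ _
    have h1 : ∫ η in (0:ℝ)..r, (Real.exp (N * η) - N * Real.exp ((N - 2) * η)) / 2 ^ n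
        = ((En - 1) / N - N * J) / 2 ^ n := by
      rw [intervalIntegral.integral_div, intervalIntegral.integral_sub int_a int_b,
        integral_exp_mul_aux N r hN0.ne', intervalIntegral.integral_const_mul]
    rw [hI, ← h1]
    exact intervalIntegral.integral_mono_on hr.le int_l int_s hsinh_lb
  have hP0 : (0:ℝ) ≤ N * 2 ^ n * A := by positivity
  have hAr : A ≤ Real.exp (-r) := by
    rw [hA]; apply Real.exp_le_exp.mpr; nlinarith
  have her0 : 0 < Real.exp (-r) := Real.exp_pos _
  have her1 : Real.exp (-r) ≤ 1 := by
    rw [show (1:ℝ) = Real.exp 0 from (Real.exp_zero).symm]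
    exact Real.exp_le_exp.mpr (by linarith)
  -- bound on the error term
  have hJub : N ^ 2 * A * J ≤ 3 * N * Real.exp (-r) := by
    have hrexp : r * Real.exp (-r) ≤ 1 := by
      have h1 : r ≤ Real.exp r := by nlinarith [Real.add_one_le_exp r]
      rw [Real.exp_neg, mul_inv_le_iff₀ (Real.exp_pos r)]
      linarith
    by_cases h32 : n = 2
    · have hN2' : N = 2 := by rw [hNdef, h32]; norm_num
      have hJval : J = r := by
        rw [hJ, hN2']
        simp
      rw [hJval, hN2']
      have hAe : A = Real.exp (-r) * Real.exp (-r) := by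
        rw [hA, hN2', ← Real.exp_add]; ring_nf
      rw [hAe]
      nlinarith [her0, hrexp]
    · have hn3 : 3 ≤ n := by omega
      have hN3 : (3:ℝ) ≤ N := by rw [hNdef]; exact_mod_cast hn3
      have hN2pos : (0:ℝ) < N - 2 := by linarith
      have hJval : J = (Real.exp ((N - 2) * r) - 1) / (N - 2) :=
        integral_exp_mul_aux (N - 2) r hN2pos.ne'
      have hE2pos : (0:ℝ) < Real.exp ((N - 2) * r) := Real.exp_pos _
      have hJub' : J ≤ Real.exp ((N - 2) * r) / (N - 2) := by
        rw [hJval]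
        gcongr
        linarith
      have hAE : A * Real.exp ((N - 2) * r) = Real.exp (-r) * Real.exp (-r) := by
        rw [hA, ← Real.exp_add, ← Real.exp_add]; congr 1; ring
      calc N ^ 2 * A * J ≤ N ^ 2 * A * (Real.exp ((N - 2) * r) / (N - 2)) := by
            apply mul_le_mul_of_nonneg_left hJub' (by positivity)
        _ = (N ^ 2 / (N - 2)) * (A * Real.exp ((N - 2) * r)) := by
            field_simp
        _ = (N ^ 2 / (N - 2)) * (Real.exp (-r) * Real.exp (-r)) := by rw [hAE]
        _ ≤ (3 * N) * (Real.exp (-r) * Real.exp (-r)) := by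
            apply mul_le_mul_of_nonneg_right _ (by positivity)
            rw [div_le_iff₀ hN2pos]
            nlinarith [mul_nonneg hN0.le (show (0:ℝ) ≤ N - 3 by linarith)]
        _ ≤ 3 * N * Real.exp (-r) := by
            have h : Real.exp (-r) * Real.exp (-r) ≤ Real.exp (-r) := by nlinarith [her0, her1]
            exact mul_le_mul_of_nonneg_left h (by positivity)
  constructor
  · -- lower bound
    have h1 := mul_le_mul_of_nonneg_left hIlb hP0
    have expand : N * 2 ^ n * A * (((En - 1) / N - N * J) / 2 ^ n)
        = A * En - A - N ^ 2 * A * J := by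
      field_simp
    rw [expand] at h1
    have hfin : (0:ℝ) ≤ (N + 3) * Real.exp (-r) := by positivity
    linarith
  · -- upper bound
    have h2 := mul_le_mul_of_nonneg_left hIub hP0
    have expand2 : N * 2 ^ n * A * (((En - 1) / N) / 2 ^ n) = A * En - A := by
      field_simp
    rw [expand2] at h2
    linarith
end

section
/- There exist constants C > 0 and c > 0 such that for every integer m ≥ 3 and every real R > 0 with m·e^{−R} ≤ c, one has | e^{(m−1)R} · (∫₀^R sinh^{m−1}(η) dη) / (∫₀^{2R} sinh^{m−1}(η) dη) − 1 | ≤ C·m·e^{−R}. -/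
/-!
On `[a, ∞)` with `a ≥ 0` one has `(1 - e^{-2a}) e^η / 2 ≤ sinh η ≤ e^η / 2`, so after raising to the
power `n = m - 1` both integrals are squeezed between explicit integrals of `e^{nη}`. The main
part of `∫₀^{2R}` comes from `[R, 2R]` and the main part of `∫₀^R` from `[R/2, R]`; Bernoulli's
inequality turns the factors `(1 - e^{-R})^n`, `(1 - e^{-2R})^n` into `1 - O(m e^{-R})`, and the
lost piece `∫₀^{R/2}` contributes only `e^{-nR/2} ≤ e^{-R}`.
-/

open Real intervalIntegral

lemma one_sub_mul_le_one_sub_pow {R : Type*} [Ring R] [LinearOrder R] [IsStrictOrderedRing R]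
    {t : R} (ht : t ≤ 2) (n : ℕ) : 1 - n * t ≤ (1 - t) ^ n := by
  simpa [sub_eq_add_neg] using one_add_mul_le_pow (a := -t) (neg_le_neg ht) n

lemma sinh_le_exp_div_two (η : ℝ) : sinh η ≤ exp η / 2 := by
  rw [sinh_eq]
  linarith [exp_pos (-η)]

lemma one_sub_exp_mul_le_sinh {a η : ℝ} (h : a ≤ η) :
    (1 - exp (-(2 * a))) * (exp η / 2) ≤ sinh η := by
  have : exp (-η) ≤ exp (-(2 * a)) * exp η := by
    rw [← exp_add]
    exact exp_le_exp.2 (by linarith)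
  rw [sinh_eq]
  linarith

lemma integral_exp_div_two_pow {n : ℕ} (hn : n ≠ 0) (a b : ℝ) :
    ∫ η in a..b, (exp η / 2) ^ n = (exp (n * b) - exp (n * a)) / (n * 2 ^ n) := by
  have hn' : (n : ℝ) ≠ 0 := Nat.cast_ne_zero.2 hn
  have h : ∀ η : ℝ, (exp η / 2) ^ n = (2 ^ n)⁻¹ * exp (n * η) := fun η => by
    rw [div_pow, ← exp_nat_mul]
    ring
  simp_rw [h]
  rw [integral_const_mul, integral_comp_mul_left (fun x => exp x) hn', integral_exp, smul_eq_mul]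
  field_simp

section IntegralSinhPow

variable {n : ℕ}

lemma integral_sinh_pow_pos_s3 {b : ℝ} (hb : 0 < b) : 0 < ∫ η in 0..b, sinh η ^ n :=
  intervalIntegral_pos_of_pos_on ((continuous_sinh.pow n).intervalIntegrable 0 b)
    (fun _ hη => pow_pos (sinh_pos_iff.2 hη.1) n) hb

lemma integral_sinh_pow_le (hn : n ≠ 0) {b : ℝ} (hb : 0 ≤ b) :
    ∫ η in 0..b, sinh η ^ n ≤ (exp (n * b) - 1) / (n * 2 ^ n) := by
  calc ∫ η in 0..b, sinh η ^ n ≤ ∫ η in 0..b, (exp η / 2) ^ n :=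
        integral_mono_on hb ((continuous_sinh.pow n).intervalIntegrable 0 b)
          (((continuous_exp.div_const 2).pow n).intervalIntegrable 0 b)
          fun η hη => pow_le_pow_left₀ (sinh_nonneg_iff.2 hη.1) (sinh_le_exp_div_two η) n
    _ = (exp (n * b) - 1) / (n * 2 ^ n) := by
        rw [integral_exp_div_two_pow hn, mul_zero, exp_zero]

lemma le_integral_sinh_pow (hn : n ≠ 0) {a b : ℝ} (ha : 0 ≤ a) (hab : a ≤ b) :
    (1 - exp (-(2 * a))) ^ n * ((exp (n * b) - exp (n * a)) / (n * 2 ^ n))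
      ≤ ∫ η in 0..b, sinh η ^ n := by
  have hint : ∀ c d : ℝ, IntervalIntegrable (fun η => sinh η ^ n) MeasureTheory.volume c d :=
    fun c d => (continuous_sinh.pow n).intervalIntegrable c d
  have hfactor : 0 ≤ 1 - exp (-(2 * a)) := sub_nonneg.2 (exp_le_one_iff.2 (by linarith))
  have hhead : 0 ≤ ∫ η in 0..a, sinh η ^ n :=
    integral_nonneg ha fun η hη => pow_nonneg (sinh_nonneg_iff.2 hη.1) n
  calc (1 - exp (-(2 * a))) ^ n * ((exp (n * b) - exp (n * a)) / (n * 2 ^ n))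
      = ∫ η in a..b, ((1 - exp (-(2 * a))) * (exp η / 2)) ^ n := by
        simp_rw [mul_pow]
        rw [integral_const_mul, integral_exp_div_two_pow hn]
    _ ≤ ∫ η in a..b, sinh η ^ n :=
        integral_mono_on hab ((by fun_prop : Continuous _).intervalIntegrable a b) (hint a b) fun η hη =>
          pow_le_pow_left₀ (mul_nonneg hfactor (by positivity))
            (one_sub_exp_mul_le_sinh hη.1) n
    _ ≤ ∫ η in 0..b, sinh η ^ n := by
        rw [← integral_add_adjacent_intervals (hint 0 a) (hint a b)]
        linarith

lemma exp_mul_integral_sinh_pow_div_le (hn : n ≠ 0) {R : ℝ} (hR : 0 < R) :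
    exp (n * R) * (∫ η in 0..R, sinh η ^ n) / (∫ η in 0..(2 * R), sinh η ^ n)
      ≤ ((1 - exp (-(2 * R))) ^ n)⁻¹ := by
  set w := exp (n * R)
  have hα : 0 < (1 - exp (-(2 * R))) ^ n :=
    pow_pos (sub_pos.2 (exp_lt_one_iff.2 (by linarith))) n
  have hw : 1 ≤ w := one_le_exp (by positivity)
  have hw2 : exp (n * (2 * R)) = w * w := by rw [← exp_add]; ring_nf
  have hupper := integral_sinh_pow_le hn hR.le
  have hlower := le_integral_sinh_pow hn hR.le (by linarith : R ≤ 2 * R)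
  rw [hw2] at hlower
  rw [div_le_iff₀ (integral_sinh_pow_pos_s3 (by linarith)), le_inv_mul_iff₀ hα]
  calc (1 - exp (-(2 * R))) ^ n * (w * ∫ η in 0..R, sinh η ^ n)
      ≤ (1 - exp (-(2 * R))) ^ n * (w * ((w - 1) / (n * 2 ^ n))) := by gcongr
    _ = (1 - exp (-(2 * R))) ^ n * ((w * w - w) / (n * 2 ^ n)) := by ring
    _ ≤ ∫ η in 0..(2 * R), sinh η ^ n := hlower

lemma le_exp_mul_integral_sinh_pow_div (hn : n ≠ 0) {R : ℝ} (hR : 0 < R) :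
    (1 - exp (-R)) ^ n * (1 - exp (-(n * R / 2)))
      ≤ exp (n * R) * (∫ η in 0..R, sinh η ^ n) / (∫ η in 0..(2 * R), sinh η ^ n) := by
  set w := exp (n * R)
  set u := exp (-(n * R / 2))
  have hD : 0 < (n : ℝ) * 2 ^ n := by have := Nat.pos_of_ne_zero hn; positivity
  have hβ : 0 ≤ (1 - exp (-R)) ^ n := pow_nonneg (sub_nonneg.2 (exp_le_one_iff.2 (by linarith))) n
  have hu : 0 ≤ 1 - u := sub_nonneg.2 (exp_le_one_iff.2 (by simp only [neg_nonpos]; positivity))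
  have hw2 : exp (n * (2 * R)) = w * w := by rw [← exp_add]; ring_nf
  have hwu : exp (n * (R / 2)) = w * u := by rw [← exp_add]; ring_nf
  have hupper := integral_sinh_pow_le hn (by linarith : 0 ≤ 2 * R)
  have hlower := le_integral_sinh_pow hn (by linarith : 0 ≤ R / 2) (by linarith : R / 2 ≤ R)
  rw [hw2] at hupper
  rw [hwu, show 2 * (R / 2) = R by ring] at hlower
  rw [le_div_iff₀ (integral_sinh_pow_pos_s3 (by linarith))]
  calc (1 - exp (-R)) ^ n * (1 - u) * ∫ η in 0..(2 * R), sinh η ^ n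
      ≤ (1 - exp (-R)) ^ n * (1 - u) * ((w * w - 1) / (n * 2 ^ n)) := by gcongr
    _ ≤ (1 - exp (-R)) ^ n * (1 - u) * (w * w / (n * 2 ^ n)) := by gcongr; linarith
    _ = w * ((1 - exp (-R)) ^ n * ((w - w * u) / (n * 2 ^ n))) := by ring
    _ ≤ w * ∫ η in 0..R, sinh η ^ n := by gcongr

end IntegralSinhPow

lemma abs_exp_mul_integral_sinh_pow_div_sub_one_le {n : ℕ} (hn : 2 ≤ n) {R : ℝ} (hR : 0 < R)
    (hsmall : (n + 1) * exp (-R) ≤ 1 / 2) :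
    |exp (n * R) * (∫ η in 0..R, sinh η ^ n) / (∫ η in 0..(2 * R), sinh η ^ n) - 1|
      ≤ 2 * ((n + 1) * exp (-R)) := by
  set x := (n + 1) * exp (-R)
  have hn0 : n ≠ 0 := by omega
  have hn2 : (2 : ℝ) ≤ n := by exact_mod_cast hn
  have he : 0 < exp (-R) := exp_pos _
  have hx : 0 ≤ x := by positivity
  have he1 : exp (-R) ≤ 1 := exp_le_one_iff.2 (by linarith)
  have he2 : exp (-(2 * R)) ≤ exp (-R) := exp_le_exp.2 (by linarith)
  have hne : (n : ℝ) * exp (-R) ≤ x := by linarith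
  have h3e : 3 * exp (-R) ≤ x := by nlinarith
  have hβ : 1 - x ≤ (1 - exp (-R)) ^ n :=
    le_trans (by linarith) (one_sub_mul_le_one_sub_pow (by linarith) n)
  have hα : 1 - x ≤ (1 - exp (-(2 * R))) ^ n :=
    le_trans (by nlinarith) (one_sub_mul_le_one_sub_pow (by linarith [exp_pos (-(2 * R))]) n)
  have htail : exp (-(n * R / 2)) ≤ x / 3 := by
    have : exp (-(n * R / 2)) ≤ exp (-R) :=
      exp_le_exp.2 (by nlinarith [mul_le_mul_of_nonneg_right hn2 hR.le])
    linarith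
  have hupper := exp_mul_integral_sinh_pow_div_le hn0 hR
  have hlower := le_exp_mul_integral_sinh_pow_div hn0 hR
  have hinv : ((1 - exp (-(2 * R))) ^ n)⁻¹ ≤ 1 + 2 * x := by
    rw [inv_le_iff_one_le_mul₀ (by linarith)]
    nlinarith [mul_le_mul_of_nonneg_left hα (by linarith : 0 ≤ 1 + 2 * x)]
  have hprod : (1 - x) * (1 - x / 3) ≤ (1 - exp (-R)) ^ n * (1 - exp (-(n * R / 2))) :=
    mul_le_mul hβ (by linarith) (by linarith) (by linarith)
  rw [abs_le]
  constructor
  · nlinarith [sq_nonneg x]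
  · linarith

/-- `L_R(ℍ^m) = (1 + O(m e^{-R})) e^{-R(m-1)}` in integral form: for `m e^{-R}` small,
`| e^{(m-1)R} (∫₀^R sinh^{m-1}) / (∫₀^{2R} sinh^{m-1}) - 1 | ≤ C m e^{-R}`. -/
theorem stmt_3 :
    ∃ C : ℝ, 0 < C ∧ ∃ c : ℝ, 0 < c ∧
      ∀ m : ℕ, 3 ≤ m → ∀ R : ℝ, 0 < R → (m : ℝ) * Real.exp (-R) ≤ c →
        |Real.exp (((m : ℝ) - 1) * R) *
            (∫ η in (0:ℝ)..R, Real.sinh η ^ (m - 1)) /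
              (∫ η in (0:ℝ)..(2 * R), Real.sinh η ^ (m - 1)) - 1|
          ≤ C * (m : ℝ) * Real.exp (-R) := by
  refine ⟨2, two_pos, 1 / 2, one_half_pos, fun m hm R hR hsmall => ?_⟩
  obtain ⟨n, rfl⟩ : ∃ n, m = n + 1 := ⟨m - 1, by omega⟩
  push_cast at hsmall ⊢
  simpa [mul_assoc] using abs_exp_mul_integral_sinh_pow_div_sub_one_le (by omega) hR hsmall
end

section
/- There exists m₀ such that for every integer m ≥ m₀ and every real R with 0 < R < m, there is exactly one τ ∈ (0, R] satisfying m·tanh²(τ/2) = 50·tanh²(2R)·(ln m + ln(ln(sinh(2R)/sinh τ))). -/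
open Real Set

lemma aux_sinh_le_mul_cosh {x : ℝ} (hx : 0 ≤ x) : Real.sinh x ≤ x * Real.cosh x := by
  have h : MonotoneOn (fun y : ℝ => y * Real.cosh y - Real.sinh y) (Set.Ici 0) := by
    apply monotoneOn_of_deriv_nonneg (convex_Ici 0)
    · exact ((continuous_id.mul Real.continuous_cosh).sub Real.continuous_sinh).continuousOn
    · exact ((differentiable_id.mul Real.differentiable_cosh).sub
        Real.differentiable_sinh).differentiableOn
    · intro y hy
      rw [interior_Ici, mem_Ioi] at hy
      have h1 : HasDerivAt (fun y : ℝ => y * Real.cosh y - Real.sinh y)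
          (1 * Real.cosh y + y * Real.sinh y - Real.cosh y) y :=
        ((hasDerivAt_id y).mul (Real.hasDerivAt_cosh y)).sub (Real.hasDerivAt_sinh y)
      rw [h1.deriv]
      have : 0 ≤ Real.sinh y := Real.sinh_nonneg_iff.2 hy.le
      nlinarith
  have h0 := h (Set.mem_Ici.2 le_rfl) (hx : x ∈ Set.Ici 0) hx
  simp only [Real.sinh_zero, Real.cosh_zero, mul_one, zero_mul, sub_zero] at h0
  linarith

lemma aux_tanh_le_self {x : ℝ} (hx : 0 ≤ x) : Real.tanh x ≤ x := by
  rw [Real.tanh_eq_sinh_div_cosh, div_le_iff₀ (Real.cosh_pos x)]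
  exact aux_sinh_le_mul_cosh hx

lemma aux_cosh_le_two {x : ℝ} (h0 : 0 ≤ x) (h1 : x ≤ 1) : Real.cosh x ≤ 2 := by
  have h2 : Real.cosh x ≤ Real.cosh 1 := by
    rw [Real.cosh_le_cosh]
    rw [abs_of_nonneg h0, abs_one]; exact h1
  have h3 : Real.cosh 1 < 2 := by
    rw [Real.cosh_eq]
    have e1 : Real.exp 1 < 2.7182818286 := Real.exp_one_lt_d9
    have e2 : Real.exp (-1) < 1 := by
      rw [Real.exp_lt_one_iff]; norm_num
    linarith
  linarith

lemma aux_half_le_tanh {x : ℝ} (h0 : 0 ≤ x) (h1 : x ≤ 1) : x / 2 ≤ Real.tanh x := by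
  rw [Real.tanh_eq_sinh_div_cosh, le_div_iff₀ (Real.cosh_pos x)]
  have hs : x ≤ Real.sinh x := Real.self_le_sinh_iff.2 h0
  have hc : Real.cosh x ≤ 2 := aux_cosh_le_two h0 h1
  nlinarith [Real.cosh_pos x]

lemma aux_tanh_lt_tanh {a b : ℝ} (h : a < b) : Real.tanh a < Real.tanh b := by
  rw [Real.tanh_eq_sinh_div_cosh, Real.tanh_eq_sinh_div_cosh,
    div_lt_div_iff₀ (Real.cosh_pos a) (Real.cosh_pos b)]
  have h1 : Real.sinh (a - b) < 0 := Real.sinh_neg_iff.2 (by linarith)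
  rw [Real.sinh_sub] at h1
  linarith

lemma aux_tanh_le_tanh {a b : ℝ} (h : a ≤ b) : Real.tanh a ≤ Real.tanh b := by
  rcases eq_or_lt_of_le h with rfl | h
  · exact le_refl _
  · exact (aux_tanh_lt_tanh h).le

lemma aux_tanh_pos {x : ℝ} (h : 0 < x) : 0 < Real.tanh x := by
  have := aux_tanh_lt_tanh h
  rwa [Real.tanh_zero] at this

lemma aux_tanh_lt_one (x : ℝ) : Real.tanh x < 1 := by
  rw [Real.tanh_eq_sinh_div_cosh, div_lt_one (Real.cosh_pos x)]
  exact Real.sinh_lt_cosh x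

lemma aux_half_le_log_two : (1/2 : ℝ) ≤ Real.log 2 := by
  rw [Real.le_log_iff_exp_le (by norm_num : (0:ℝ) < 2)]
  have h1 : Real.exp (1/2) * Real.exp (1/2) = Real.exp 1 := by
    rw [← Real.exp_add]; norm_num
  nlinarith [Real.exp_one_lt_d9, Real.exp_pos (1/2 : ℝ)]

lemma aux_neg_one_le_loglog {x : ℝ} (hx : 2 ≤ x) : (-1 : ℝ) ≤ Real.log (Real.log x) := by
  have hl2 : (1/2 : ℝ) ≤ Real.log 2 := aux_half_le_log_two
  have hlx : (1/2 : ℝ) ≤ Real.log x :=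
    le_trans hl2 (Real.log_le_log (by norm_num) hx)
  rw [Real.le_log_iff_exp_le (by linarith)]
  have he : Real.exp (-1) < 1/2 := by
    have h2 : (2:ℝ) < Real.exp 1 := by
      have := Real.exp_one_gt_d9; linarith
    rw [Real.exp_neg]
    have := Real.exp_pos 1
    rw [inv_lt_iff_one_lt_mul₀ (by positivity)]
    nlinarith
  linarith

set_option maxHeartbeats 2000000 in
/-- For large `m` and `0 < R < m`, the equation
`m tanh²(τ/2) = 50 tanh²(2R) (ln m + ln ln (sinh 2R / sinh τ))` has a unique root
`τ ∈ (0, R]`. -/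
theorem stmt_8 :
    ∃ m₀ : ℕ, ∀ m : ℕ, m₀ ≤ m → ∀ R : ℝ, 0 < R → R < (m : ℝ) →
      ∃! τ : ℝ, τ ∈ Set.Ioc 0 R ∧
        (m : ℝ) * Real.tanh (τ / 2) ^ 2
          = 50 * Real.tanh (2 * R) ^ 2 *
              (Real.log m + Real.log (Real.log (Real.sinh (2 * R) / Real.sinh τ))) := by
  refine ⟨10^10, fun m hm R hR hRm => ?_⟩
  set M : ℝ := (m : ℝ) with hMdef
  have hM10 : (10:ℝ)^10 ≤ M := by
    have : ((10^10 : ℕ) : ℝ) ≤ M := Nat.cast_le.2 hm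
    norm_num at this ⊢
    linarith
  have hMpos : (0:ℝ) < M := by norm_num at hM10 ⊢; linarith
  have hM1 : (1:ℝ) ≤ M := by norm_num at hM10 ⊢; linarith
  -- sqrt facts
  have hsqrt : (10:ℝ)^5 ≤ Real.sqrt M := by
    have h1 : Real.sqrt ((10:ℝ)^10) ≤ Real.sqrt M := Real.sqrt_le_sqrt hM10
    have h2 : Real.sqrt ((10:ℝ)^10) = (10:ℝ)^5 := by
      rw [show ((10:ℝ)^10) = ((10:ℝ)^5)^2 by norm_num, Real.sqrt_sq (by norm_num)]
    linarith
  have hsq : Real.sqrt M * Real.sqrt M = M := Real.mul_self_sqrt hMpos.le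
  have hlog_le : Real.log M ≤ 2 * Real.sqrt M := by
    have h1 : Real.log (Real.sqrt M) ≤ Real.sqrt M - 1 :=
      Real.log_le_sub_one_of_pos (by positivity)
    have h2 : Real.log (Real.sqrt M) = Real.log M / 2 := Real.log_sqrt hMpos.le
    linarith
  have hlog_ge : (11:ℝ) ≤ Real.log M := by
    rw [Real.le_log_iff_exp_le hMpos]
    have h1 : Real.exp 11 = Real.exp 1 ^ (11:ℕ) := by
      rw [← Real.exp_nat_mul]; norm_num
    have h2 : Real.exp 1 ^ (11:ℕ) ≤ (2.7182818286:ℝ) ^ (11:ℕ) :=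
      pow_le_pow_left₀ (Real.exp_pos 1).le Real.exp_one_lt_d9.le _
    have h3 : (2.7182818286:ℝ) ^ (11:ℕ) ≤ (10:ℝ)^10 := by norm_num
    linarith
  -- r = min R 1
  set r : ℝ := min R 1 with hrdef
  have hr0 : 0 < r := lt_min hR one_pos
  have hr1 : r ≤ 1 := min_le_right _ _
  have hrR : r ≤ R := min_le_left _ _
  -- tanh facts
  have t2R_pos : 0 < Real.tanh (2*R) := aux_tanh_pos (by linarith)
  have t2R_le : Real.tanh (2*R) ≤ 2*r := by
    rcases le_total R 1 with h | h
    · have he : r = R := min_eq_left h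
      rw [he]
      have := aux_tanh_le_self (show (0:ℝ) ≤ 2*R by linarith)
      linarith
    · have he : r = 1 := min_eq_right h
      rw [he]
      have := aux_tanh_lt_one (2*R)
      linarith
  have t2R_ge : r/2 ≤ Real.tanh (2*R) := by
    have h1 : r/2 ≤ Real.tanh r := aux_half_le_tanh hr0.le hr1
    have h2 : Real.tanh r ≤ Real.tanh (2*R) := aux_tanh_le_tanh (by linarith)
    linarith
  have tR2_ge : r/4 ≤ Real.tanh (R/2) := by
    have h1 : (r/2)/2 ≤ Real.tanh (r/2) := aux_half_le_tanh (by linarith) (by linarith)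
    have h2 : Real.tanh (r/2) ≤ Real.tanh (R/2) := aux_tanh_le_tanh (by linarith)
    linarith
  -- ratio facts
  have hsinh2R : 0 < Real.sinh (2*R) := Real.sinh_pos_iff.2 (by linarith)
  have hA2 : ∀ τ : ℝ, 0 < τ → τ ≤ R → 2 ≤ Real.sinh (2*R) / Real.sinh τ := by
    intro τ h0 h1
    have hs : 0 < Real.sinh τ := Real.sinh_pos_iff.2 h0
    rw [le_div_iff₀ hs, Real.sinh_two_mul]
    have hle : Real.sinh τ ≤ Real.sinh R := Real.sinh_le_sinh.2 h1
    have hc := Real.one_le_cosh R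
    nlinarith only [hle, hc, hs]
  have hlogA : ∀ τ : ℝ, 0 < τ → τ ≤ R →
      1/2 ≤ Real.log (Real.sinh (2*R) / Real.sinh τ) := by
    intro τ h0 h1
    exact le_trans aux_half_le_log_two (Real.log_le_log (by norm_num) (hA2 τ h0 h1))
  have hloglogA_lb : ∀ τ : ℝ, 0 < τ → τ ≤ R →
      (-1:ℝ) ≤ Real.log (Real.log (Real.sinh (2*R) / Real.sinh τ)) := by
    intro τ h0 h1
    exact aux_neg_one_le_loglog (hA2 τ h0 h1)
  -- value at R
  have hsinhR : 0 < Real.sinh R := Real.sinh_pos_iff.2 hR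
  have hAR : Real.sinh (2*R) / Real.sinh R = 2 * Real.cosh R := by
    rw [Real.sinh_two_mul]; field_simp
  have hSR_ub : Real.log (Real.log (Real.sinh (2*R) / Real.sinh R)) ≤ Real.log M + 1 := by
    rw [hAR]
    have hc1 : Real.cosh R ≤ Real.exp R := by
      rw [Real.cosh_eq]
      have := Real.exp_pos (-R)
      have h2 : Real.exp (-R) ≤ Real.exp R := Real.exp_le_exp.2 (by linarith)
      linarith
    have h1 : Real.log (2 * Real.cosh R) ≤ M + 1 := by
      have hc2 : (0:ℝ) < 2 * Real.cosh R := by positivity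
      have h3 : Real.log (2 * Real.cosh R) ≤ Real.log (2 * Real.exp R) :=
        Real.log_le_log hc2 (by nlinarith only [hc1])
      rw [Real.log_mul (by norm_num) (Real.exp_pos R).ne', Real.log_exp] at h3
      have := Real.log_two_lt_d9
      linarith
    have h2 : 1/2 ≤ Real.log (2 * Real.cosh R) := by
      have := hlogA R hR le_rfl; rwa [hAR] at this
    have h4 : Real.log (Real.log (2 * Real.cosh R)) ≤ Real.log (M + 1) :=
      Real.log_le_log (by linarith) h1
    have h5 : Real.log (M + 1) ≤ Real.log (2 * M) :=
      Real.log_le_log (by linarith) (by linarith)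
    have h6 : Real.log (2 * M) = Real.log 2 + Real.log M :=
      Real.log_mul (by norm_num) (by positivity)
    have := Real.log_two_lt_d9
    linarith
  -- left endpoint τ₁
  have hsqrt1 : (1:ℝ) ≤ Real.sqrt M := by linarith [hsqrt]
  have hsqrtpos : (0:ℝ) < Real.sqrt M := by linarith
  set τ₁ : ℝ := r / Real.sqrt M with hτ₁def
  have hτ₁pos : 0 < τ₁ := by positivity
  have hτ₁R : τ₁ ≤ R := by
    rw [hτ₁def, div_le_iff₀ hsqrtpos]
    nlinarith only [hrR, hsqrt1, hR, mul_le_mul_of_nonneg_left hsqrt1 hR.le]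
  have hτ₁sq : τ₁^2 * M = r^2 := by
    rw [hτ₁def, div_pow, Real.sq_sqrt hMpos.le]
    field_simp
  -- endpoint inequalities
  have hgτ₁ : M * Real.tanh (τ₁/2)^2 - 50 * Real.tanh (2*R)^2 *
      (Real.log M + Real.log (Real.log (Real.sinh (2*R) / Real.sinh τ₁))) < 0 := by
    have h1 : Real.tanh (τ₁/2) ≤ τ₁/2 := aux_tanh_le_self (by positivity)
    have h2 : 0 < Real.tanh (τ₁/2) := aux_tanh_pos (by positivity)
    have h3 : Real.tanh (τ₁/2)^2 ≤ (τ₁/2)^2 := by nlinarith only [h1, h2]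
    have hL : M * Real.tanh (τ₁/2)^2 ≤ r^2/4 := by
      have h4 : M * Real.tanh (τ₁/2)^2 ≤ M * (τ₁/2)^2 :=
        mul_le_mul_of_nonneg_left h3 hMpos.le
      have h5 : M * (τ₁/2)^2 = r^2/4 := by linear_combination hτ₁sq / 4
      linarith
    have hS : 10 ≤ Real.log M +
        Real.log (Real.log (Real.sinh (2*R) / Real.sinh τ₁)) := by
      have := hloglogA_lb τ₁ hτ₁pos hτ₁R
      linarith
    have h5 : (r/2)^2 ≤ Real.tanh (2*R)^2 := by nlinarith only [t2R_ge, hr0]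
    have h6 : (r/2)^2 * 10 ≤ Real.tanh (2*R)^2 * (Real.log M +
        Real.log (Real.log (Real.sinh (2*R) / Real.sinh τ₁))) :=
      mul_le_mul h5 hS (by norm_num) (sq_nonneg _)
    have hr2 : 0 < r^2 := by positivity
    linarith only [h6, hL, hr2]
  have hgR : 0 ≤ M * Real.tanh (R/2)^2 - 50 * Real.tanh (2*R)^2 *
      (Real.log M + Real.log (Real.log (Real.sinh (2*R) / Real.sinh R))) := by
    have hL : M * (r/4)^2 ≤ M * Real.tanh (R/2)^2 := by
      have h3 : (r/4)^2 ≤ Real.tanh (R/2)^2 := by nlinarith only [tR2_ge, hr0]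
      exact mul_le_mul_of_nonneg_left h3 hMpos.le
    have hSub : Real.log M + Real.log (Real.log (Real.sinh (2*R) / Real.sinh R))
        ≤ 2 * Real.log M + 1 := by linarith
    have hSpos : 0 ≤ Real.log M + Real.log (Real.log (Real.sinh (2*R) / Real.sinh R)) := by
      have := hloglogA_lb R hR le_rfl; linarith
    have h5 : Real.tanh (2*R)^2 ≤ (2*r)^2 := by nlinarith only [t2R_le, t2R_pos]
    have hQub : 50 * Real.tanh (2*R)^2 * (Real.log M +
        Real.log (Real.log (Real.sinh (2*R) / Real.sinh R)))
        ≤ 200 * r^2 * (2 * Real.log M + 1) := by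
      have h7 := mul_le_mul h5 hSub hSpos (sq_nonneg (2*r))
      linarith only [h7]
    have hnum : 200 * (2 * Real.log M + 1) ≤ M/16 := by
      have h8 := mul_le_mul_of_nonneg_right hsqrt (Real.sqrt_nonneg M)
      linarith only [hlog_le, hsq, hsqrt, h8]
    have h9 := mul_le_mul_of_nonneg_left hnum (sq_nonneg r)
    linarith only [h9, hL, hQub]
  -- continuity
  have htanh_cont : Continuous Real.tanh := by
    rw [show Real.tanh = fun x => Real.sinh x / Real.cosh x from
      funext fun x => Real.tanh_eq_sinh_div_cosh x]
    exact Real.continuous_sinh.div Real.continuous_cosh fun x => (Real.cosh_pos x).ne'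
  have hcont : ContinuousOn (fun τ : ℝ => M * Real.tanh (τ/2)^2 -
      50 * Real.tanh (2*R)^2 * (Real.log M +
        Real.log (Real.log (Real.sinh (2*R) / Real.sinh τ)))) (Set.Icc τ₁ R) := by
    have hc1 : Continuous fun τ : ℝ => M * Real.tanh (τ/2)^2 :=
      continuous_const.mul ((htanh_cont.comp (continuous_id.div_const 2)).pow 2)
    have hcA : ContinuousOn (fun τ : ℝ => Real.sinh (2*R) / Real.sinh τ) (Set.Icc τ₁ R) := by
      apply ContinuousOn.div continuousOn_const Real.continuous_sinh.continuousOn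
      intro τ hτ
      exact (Real.sinh_pos_iff.2 (lt_of_lt_of_le hτ₁pos hτ.1)).ne'
    have hcA1 : ContinuousOn (fun τ : ℝ =>
        Real.log (Real.sinh (2*R) / Real.sinh τ)) (Set.Icc τ₁ R) := by
      apply hcA.log
      intro τ hτ
      have := hA2 τ (lt_of_lt_of_le hτ₁pos hτ.1) hτ.2
      linarith
    have hcA2 : ContinuousOn (fun τ : ℝ =>
        Real.log (Real.log (Real.sinh (2*R) / Real.sinh τ))) (Set.Icc τ₁ R) := by
      apply hcA1.log
      intro τ hτ
      have := hlogA τ (lt_of_lt_of_le hτ₁pos hτ.1) hτ.2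
      linarith
    exact hc1.continuousOn.sub
      (continuousOn_const.mul (continuousOn_const.add hcA2))
  -- IVT
  obtain ⟨τ, hτmem, hτ0⟩ := intermediate_value_Icc hτ₁R hcont ⟨hgτ₁.le, hgR⟩
  have hτIoc : τ ∈ Set.Ioc 0 R := ⟨lt_of_lt_of_le hτ₁pos hτmem.1, hτmem.2⟩
  have hτeq : M * Real.tanh (τ/2)^2 = 50 * Real.tanh (2*R)^2 *
      (Real.log M + Real.log (Real.log (Real.sinh (2*R) / Real.sinh τ))) := by
    have h : M * Real.tanh (τ/2)^2 - 50 * Real.tanh (2*R)^2 *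
        (Real.log M + Real.log (Real.log (Real.sinh (2*R) / Real.sinh τ))) = 0 := hτ0
    linarith
  -- uniqueness via strict monotonicity
  have key : ∀ a b : ℝ, 0 < a → b ≤ R → a < b →
      M * Real.tanh (a/2)^2 = 50 * Real.tanh (2*R)^2 *
        (Real.log M + Real.log (Real.log (Real.sinh (2*R) / Real.sinh a))) →
      M * Real.tanh (b/2)^2 = 50 * Real.tanh (2*R)^2 *
        (Real.log M + Real.log (Real.log (Real.sinh (2*R) / Real.sinh b))) →
      False := by
    intro a b ha hbR hab heqa heqb
    have hb : 0 < b := lt_trans ha hab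
    have haR : a ≤ R := le_of_lt (lt_of_lt_of_le hab hbR)
    have h1 : M * Real.tanh (a/2)^2 < M * Real.tanh (b/2)^2 := by
      have ht := aux_tanh_lt_tanh (show a/2 < b/2 by linarith)
      have ta := aux_tanh_pos (show (0:ℝ) < a/2 by linarith)
      have : Real.tanh (a/2)^2 < Real.tanh (b/2)^2 := by nlinarith only [ht, ta]
      exact mul_lt_mul_of_pos_left this hMpos
    have h2 : Real.log (Real.log (Real.sinh (2*R) / Real.sinh b)) <
        Real.log (Real.log (Real.sinh (2*R) / Real.sinh a)) := by
      have hsa : 0 < Real.sinh a := Real.sinh_pos_iff.2 ha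
      have hsab : Real.sinh a < Real.sinh b := Real.sinh_lt_sinh.2 hab
      have hAab : Real.sinh (2*R) / Real.sinh b < Real.sinh (2*R) / Real.sinh a :=
        div_lt_div_of_pos_left hsinh2R hsa hsab
      have hAb2 : 2 ≤ Real.sinh (2*R) / Real.sinh b := hA2 b hb hbR
      have hlb : Real.log (Real.sinh (2*R) / Real.sinh b) <
          Real.log (Real.sinh (2*R) / Real.sinh a) :=
        Real.log_lt_log (by linarith) hAab
      exact Real.log_lt_log (by linarith [hlogA b hb hbR]) hlb
    have hQpos : 0 < 50 * Real.tanh (2*R)^2 := by positivity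
    have h3 := mul_lt_mul_of_pos_left h2 hQpos
    linarith only [h3, h1, heqa, heqb]
  refine ⟨τ, ⟨hτIoc, hτeq⟩, ?_⟩
  rintro y ⟨hyIoc, hyeq⟩
  rcases lt_trichotomy y τ with h | h | h
  · exact absurd (key y τ hyIoc.1 hτIoc.2 h hyeq hτeq) (by simp)
  · exact h
  · exact absurd (key τ y hτIoc.1 hyIoc.2 h hτeq hyeq) (by simp)
end

section
/- There exists m₀ such that for every integer m ≥ m₀ and every real R ≥ m, there is exactly one τ ∈ (0, R] satisfying cosh²(τ/2) = m·ln(cosh(2R)); moreover, this τ satisfies τ > ln m. -/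
lemma coshHalfSq (x : ℝ) : Real.cosh (x / 2) ^ 2 = (Real.cosh x + 1) / 2 := by
  have h := Real.cosh_two_mul (x / 2)
  rw [mul_div_cancel₀ _ (two_ne_zero)] at h
  rw [Real.sinh_sq] at h
  linarith

lemma coshHalfSqMono : StrictMonoOn (fun τ : ℝ => Real.cosh (τ / 2) ^ 2) (Set.Ici 0) := by
  intro a ha b hb hab
  have h1 : Real.cosh (a / 2) < Real.cosh (b / 2) := by
    rw [Real.cosh_lt_cosh, abs_of_nonneg (by linarith [ha.out]),
      abs_of_nonneg (by linarith [hb.out])]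
    linarith
  exact pow_lt_pow_left₀ h1 (Real.cosh_pos _).le two_ne_zero

set_option maxHeartbeats 1000000 in
/-- For large `m` and `R ≥ m`, the equation `cosh²(τ/2) = m ln (cosh 2R)` has a unique
root `τ ∈ (0, R]`, and this root satisfies `τ > ln m`. -/
theorem stmt_9 :
    ∃ m₀ : ℕ, ∀ m : ℕ, m₀ ≤ m → ∀ R : ℝ, (m : ℝ) ≤ R →
      (∃! τ : ℝ, τ ∈ Set.Ioc 0 R ∧
          Real.cosh (τ / 2) ^ 2 = (m : ℝ) * Real.log (Real.cosh (2 * R))) ∧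
      (∀ τ : ℝ, τ ∈ Set.Ioc 0 R →
          Real.cosh (τ / 2) ^ 2 = (m : ℝ) * Real.log (Real.cosh (2 * R)) →
          Real.log m < τ) := by
  use 100
  intro m hm R hR
  have hm1 : (100 : ℝ) ≤ (m : ℝ) := by exact_mod_cast hm
  have hR100 : (100 : ℝ) ≤ R := le_trans hm1 hR
  set C := (m : ℝ) * Real.log (Real.cosh (2 * R)) with hCdef
  -- lower bound on log cosh 2R
  have hcosh_ge : Real.exp (2 * R) / 2 ≤ Real.cosh (2 * R) := by
    rw [Real.cosh_eq]
    have := (Real.exp_pos (-(2 * R))).le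
    linarith
  have hlog_lb : 2 * R - Real.log 2 ≤ Real.log (Real.cosh (2 * R)) := by
    have h := Real.log_le_log (by positivity) hcosh_ge
    rwa [Real.log_div (Real.exp_ne_zero _) two_ne_zero, Real.log_exp] at h
  have hlog2 : Real.log 2 < 1 := by
    have := Real.log_two_lt_d9
    linarith
  have hlog1 : (1 : ℝ) < Real.log (Real.cosh (2 * R)) := by linarith
  -- C > m
  have hCm : (m : ℝ) < C := by nlinarith
  have hC1 : (1 : ℝ) < C := by linarith
  -- upper bound: C ≤ f R
  have hcosh_le : Real.cosh (2 * R) ≤ Real.exp (2 * R) := by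
    rw [Real.cosh_eq]
    have h1 : Real.exp (-(2 * R)) ≤ 1 := Real.exp_le_one_iff.2 (by linarith)
    have h2 : (1 : ℝ) ≤ Real.exp (2 * R) := Real.one_le_exp (by linarith)
    linarith
  have hlog_ub : Real.log (Real.cosh (2 * R)) ≤ 2 * R := by
    have h := Real.log_le_log (Real.cosh_pos _) hcosh_le
    rwa [Real.log_exp] at h
  have hexpR : (R / 4) ^ 4 ≤ Real.exp R := by
    have h1 : R / 4 + 1 ≤ Real.exp (R / 4) := Real.add_one_le_exp _
    have h2 : Real.exp (R / 4) ^ 4 = Real.exp R := by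
      rw [← Real.exp_nat_mul]; congr 1; push_cast; ring
    have h3 : (R / 4) ^ 4 ≤ Real.exp (R / 4) ^ 4 := by
      apply pow_le_pow_left₀ (by linarith) (by linarith)
    linarith
  have hfR_ge : Real.exp R / 4 ≤ Real.cosh (R / 2) ^ 2 := by
    rw [coshHalfSq]
    have h : Real.exp R / 2 ≤ Real.cosh R := by
      rw [Real.cosh_eq]
      have := (Real.exp_pos (-R)).le
      linarith
    linarith
  have hCfR : C ≤ Real.cosh (R / 2) ^ 2 := by
    have h1 : C ≤ (m : ℝ) * (2 * R) := by
      have := mul_le_mul_of_nonneg_left hlog_ub (by positivity : (0:ℝ) ≤ (m:ℝ))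
      linarith
    have h2 : (m : ℝ) * (2 * R) ≤ 2 * R ^ 2 := by nlinarith
    have hRsq : (10000 : ℝ) ≤ R ^ 2 := by nlinarith
    have h3 : 2 * R ^ 2 ≤ R ^ 4 / 1024 := by
      nlinarith [mul_le_mul_of_nonneg_left hRsq (sq_nonneg R)]
    have h4 : R ^ 4 / 1024 ≤ Real.exp R / 4 := by nlinarith
    linarith
  -- existence via IVT
  have hcont : ContinuousOn (fun τ : ℝ => Real.cosh (τ / 2) ^ 2) (Set.Icc 0 R) :=
    (by continuity : Continuous fun τ : ℝ => Real.cosh (τ / 2) ^ 2).continuousOn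
  have hiv := intermediate_value_Ioc (by linarith : (0 : ℝ) ≤ R) hcont
  have hmem : C ∈ Set.Ioc (Real.cosh ((0:ℝ) / 2) ^ 2) (Real.cosh (R / 2) ^ 2) := by
    constructor
    · simpa using hC1
    · exact hCfR
  obtain ⟨τ, hτmem, hτeq⟩ := hiv hmem
  constructor
  · refine ⟨τ, ⟨hτmem, hτeq⟩, ?_⟩
    rintro σ ⟨hσmem, hσeq⟩
    exact coshHalfSqMono.injOn hσmem.1.le hτmem.1.le (hσeq.trans hτeq.symm)
  · intro σ hσmem hσeq
    by_contra h
    push_neg at h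
    have hlogm_nonneg : 0 ≤ Real.log m :=
      Real.log_nonneg (by linarith : (1 : ℝ) ≤ (m : ℝ))
    have hmono : Real.cosh (σ / 2) ^ 2 ≤ Real.cosh (Real.log m / 2) ^ 2 :=
      coshHalfSqMono.monotoneOn hσmem.1.le hlogm_nonneg h
    have hcoshlog : Real.cosh (Real.log m) = ((m : ℝ) + ((m : ℝ))⁻¹) / 2 := by
      rw [Real.cosh_eq, Real.exp_neg, Real.exp_log (by linarith : (0:ℝ) < (m:ℝ))]
    have hflogm : Real.cosh (Real.log m / 2) ^ 2 ≤ (m : ℝ) := by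
      rw [coshHalfSq, hcoshlog]
      have hinv : ((m : ℝ))⁻¹ ≤ 1 := by
        rw [inv_le_one_iff₀]; right; linarith
      linarith
    rw [hσeq] at hmono
    linarith
end

section
/- There exist constants c > 0, C > 0 and m₀ such that for every integer m ≥ m₀, every real R with 0 < R < m, and every τ ∈ (0, R] satisfying m·tanh²(τ/2) = 50·tanh²(2R)·(ln m + ln(ln(sinh(2R)/sinh τ))), one has c·cosh(2R)·√(m/ln m) ≤ sinh(2R)/sinh(τ) ≤ C·cosh(2R)·√(m/ln m). -/
/-!
Write `s = sinh 2R / sinh τ`. The half-angle identity `tanh (τ/2) = sinh τ / (cosh τ + 1)` turns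
the equation for `τ` into `m cosh² 2R = 50 (ln m + ln ln s) s² (cosh τ + 1)²`. Since `s ≥ 2`, the
factor `ln m + ln ln s` is at least `ln m / 2`, and `cosh τ + 1 ≥ 2`; this is the upper bound on `s`.
That bound gives `ln s = O(m)`, hence `ln m + ln ln s ≤ 3 ln m`; then the original equation forces
`tanh² (τ/2) = O(ln m / m)`, so `cosh τ ≤ 2` once `m` is large, and the lower bound follows.
-/

open Real Filter

namespace Real

theorem tanh_half_eq_sinh_div_cosh_add_one (x : ℝ) : tanh (x / 2) = sinh x / (cosh x + 1) := by
  obtain ⟨y, rfl⟩ : ∃ y, x = 2 * y := ⟨x / 2, by ring⟩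
  have hy : 2 * y / 2 = y := by ring
  have hpos : 0 < cosh (2 * y) + 1 := by linarith [one_le_cosh (2 * y)]
  rw [hy, tanh_eq_sinh_div_cosh, eq_div_iff hpos.ne', sinh_two_mul, cosh_two_mul]
  field_simp [(cosh_pos y).ne']
  linear_combination -sinh y * cosh_sq_sub_sinh_sq y

theorem cosh_sub_one_eq_tanh_half_sq_mul (x : ℝ) :
    cosh x - 1 = tanh (x / 2) ^ 2 * (cosh x + 1) := by
  have hpos : 0 < cosh x + 1 := by linarith [one_le_cosh x]
  rw [tanh_half_eq_sinh_div_cosh_add_one, div_pow, sinh_sq]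
  field_simp
  ring

theorem cosh_le_two_of_tanh_half_sq_le {x : ℝ} (h : tanh (x / 2) ^ 2 ≤ 1 / 3) : cosh x ≤ 2 := by
  have hpos : 0 ≤ cosh x + 1 := by linarith [one_le_cosh x]
  nlinarith [cosh_sub_one_eq_tanh_half_sq_mul x, mul_le_mul_of_nonneg_right h hpos]

theorem mul_cosh_sq_eq_of_mul_tanh_half_sq_eq {k B x y : ℝ} (hx : x ≠ 0)
    (h : k * tanh (x / 2) ^ 2 = tanh y ^ 2 * B) :
    k * cosh y ^ 2 = B * (sinh y / sinh x) ^ 2 * (cosh x + 1) ^ 2 := by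
  have hpos : 0 < cosh x + 1 := by linarith [one_le_cosh x]
  rw [tanh_half_eq_sinh_div_cosh_add_one, tanh_eq_sinh_div_cosh] at h
  field_simp [sinh_ne_zero.2 hx, (cosh_pos y).ne'] at h ⊢
  linear_combination h

theorem two_le_sinh_two_mul_div_sinh {x R : ℝ} (hx : 0 < x) (hxR : x ≤ R) :
    2 ≤ sinh (2 * R) / sinh x := by
  have hsinh : 0 < sinh x := sinh_pos_iff.2 hx
  have hle : sinh x ≤ sinh R := sinh_le_sinh.2 hxR
  rw [le_div_iff₀ hsinh, sinh_two_mul]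
  nlinarith [one_le_cosh R]

theorem neg_one_le_log_log {s : ℝ} (hs : 2 ≤ s) : -1 ≤ log (log s) := by
  have hlog : log 2 ≤ log s := log_le_log two_pos hs
  have hhalf : 1 / 2 < log s := by linarith [log_two_gt_d9]
  rw [le_log_iff_exp_le (by linarith)]
  linarith [exp_neg_one_lt_half]

theorem log_le_three_mul_of_sq_le_mul_cosh_sq {s m R : ℝ} (hs : 0 < s) (hm : 0 ≤ m) (hR : 0 ≤ R)
    (hRm : R ≤ m) (h : s ^ 2 ≤ m * cosh (2 * R) ^ 2) : log s ≤ 3 * m := by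
  have hcosh : cosh (2 * R) ≤ exp m ^ 2 := by
    have : 0 ≤ sinh (2 * R) := sinh_nonneg_iff.2 (by linarith)
    calc cosh (2 * R) ≤ exp (2 * R) := by linarith [cosh_add_sinh (2 * R)]
      _ ≤ exp m ^ 2 := by rw [← exp_nat_mul]; exact exp_le_exp.2 (by push_cast; linarith)
  have hm_exp : m ≤ exp m ^ 2 := by nlinarith [add_one_le_exp m, one_le_exp hm]
  rw [log_le_iff_le_exp hs, ← pow_le_pow_iff_left₀ hs.le (exp_pos _).le two_ne_zero]
  calc s ^ 2 ≤ m * cosh (2 * R) ^ 2 := h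
    _ ≤ exp m ^ 2 * (exp m ^ 2) ^ 2 := by gcongr
    _ = (exp m ^ 3) ^ 2 := by ring
    _ = exp (3 * m) ^ 2 := by rw [← exp_nat_mul]; norm_num

theorem log_log_le_two_mul_log {s m : ℝ} (hs : 1 < s) (h : log s ≤ m ^ 2) :
    log (log s) ≤ 2 * log m := by
  calc log (log s) ≤ log (m ^ 2) := log_le_log (log_pos hs) h
    _ = 2 * log m := by rw [log_pow]; norm_num

theorem mul_sqrt_le_of_sq_mul_le {a b x : ℝ} (ha : 0 ≤ a) (hb : 0 ≤ b) (h : a ^ 2 * x ≤ b ^ 2) :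
    a * √x ≤ b := by
  rw [← sqrt_sq ha, ← sqrt_mul (sq_nonneg a), ← sqrt_sq hb]
  exact sqrt_le_sqrt h

theorem le_mul_sqrt_of_sq_le_sq_mul {a b x : ℝ} (hb : 0 ≤ b) (h : a ^ 2 ≤ b ^ 2 * x) :
    a ≤ b * √x := by
  rw [← sqrt_sq hb, ← sqrt_mul (sq_nonneg b)]
  exact (le_abs_self a).trans (abs_le_sqrt h)

end Real

theorem eventually_two_le_log_and_mul_log_le :
    ∀ᶠ n : ℕ in atTop, 2 ≤ log n ∧ 450 * log n ≤ n := by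
  have hlog := (tendsto_log_atTop.comp tendsto_natCast_atTop_atTop).eventually_ge_atTop 2
  have hlittle := tendsto_natCast_atTop_atTop.eventually
    (isLittleO_log_id_atTop.bound (by norm_num : (0 : ℝ) < 1 / 450))
  filter_upwards [hlog, hlittle] with n (hlog : 2 ≤ log n) hlittle
  refine ⟨hlog, ?_⟩
  rw [norm_of_nonneg (by linarith), id, norm_of_nonneg n.cast_nonneg] at hlittle
  linarith

theorem sinh_two_mul_div_sinh_bounds {m R τ : ℝ} (hlog : 2 ≤ log m) (hlarge : 450 * log m ≤ m)
    (hR : R < m) (hτ : 0 < τ) (hτR : τ ≤ R)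
    (heq : m * tanh (τ / 2) ^ 2
      = 50 * tanh (2 * R) ^ 2 * (log m + log (log (sinh (2 * R) / sinh τ)))) :
    1 / 40 * cosh (2 * R) * √(m / log m) ≤ sinh (2 * R) / sinh τ ∧
      sinh (2 * R) / sinh τ ≤ 1 / 10 * cosh (2 * R) * √(m / log m) := by
  set s := sinh (2 * R) / sinh τ
  set A := log m + log (log s)
  have hl : 0 < log m := by linarith
  have hs : 2 ≤ s := two_le_sinh_two_mul_div_sinh hτ hτR
  have hE : m * cosh (2 * R) ^ 2 = 50 * A * s ^ 2 * (cosh τ + 1) ^ 2 :=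
    mul_cosh_sq_eq_of_mul_tanh_half_sq_eq hτ.ne' (by rw [heq]; ring)
  have hA_ge : log m / 2 ≤ A := by linarith [neg_one_le_log_log hs]
  have hupper : 100 * log m * s ^ 2 ≤ m * cosh (2 * R) ^ 2 := by
    have : 2 ≤ cosh τ + 1 := by linarith [one_le_cosh τ]
    calc 100 * log m * s ^ 2 = 50 * (log m / 2) * s ^ 2 * 2 ^ 2 := by ring
      _ ≤ 50 * A * s ^ 2 * (cosh τ + 1) ^ 2 := by gcongr; nlinarith [sq_nonneg s]
      _ = m * cosh (2 * R) ^ 2 := hE.symm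
  have hA_le : A ≤ 3 * log m := by
    have hlog_s : log s ≤ 3 * m :=
      log_le_three_mul_of_sq_le_mul_cosh_sq (by linarith) (by linarith) (by linarith) hR.le
        (by nlinarith)
    linarith [log_log_le_two_mul_log (by linarith) (by nlinarith : log s ≤ m ^ 2)]
  have hcosh : cosh τ ≤ 2 := by
    apply cosh_le_two_of_tanh_half_sq_le
    have : m * tanh (τ / 2) ^ 2 ≤ 150 * log m := by
      rw [heq]; nlinarith [tanh_sq_lt_one (2 * R)]
    exact le_of_mul_le_mul_left (by linarith) (by linarith : 0 < m)
  have hlower : m * cosh (2 * R) ^ 2 ≤ 1600 * log m * s ^ 2 := by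
    calc m * cosh (2 * R) ^ 2 = 50 * A * s ^ 2 * (cosh τ + 1) ^ 2 := hE
      _ ≤ 50 * (3 * log m) * s ^ 2 * 3 ^ 2 := by gcongr; linarith
      _ ≤ 1600 * log m * s ^ 2 := by nlinarith
  constructor
  · exact mul_sqrt_le_of_sq_mul_le (by positivity) (by linarith) (by
      rw [mul_div_assoc', div_le_iff₀ hl]; linarith)
  · exact le_mul_sqrt_of_sq_le_sq_mul (by positivity) (by
      rw [mul_div_assoc', le_div_iff₀ hl]; linarith)

/-- Claim 8 of the paper: if `0 < R < m` and `τ ∈ (0, R]` is a root of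
`m tanh²(τ/2) = 50 tanh²(2R)(ln m + ln ln (sinh 2R / sinh τ))`, then
`sinh(2R)/sinh(τ) = Θ(cosh(2R) √(m / ln m))`. -/
theorem stmt_10 :
    ∃ c : ℝ, 0 < c ∧ ∃ C : ℝ, 0 < C ∧ ∃ m₀ : ℕ,
      ∀ m : ℕ, m₀ ≤ m → ∀ R : ℝ, 0 < R → R < (m : ℝ) →
        ∀ τ : ℝ, τ ∈ Set.Ioc 0 R →
          (m : ℝ) * Real.tanh (τ / 2) ^ 2
              = 50 * Real.tanh (2 * R) ^ 2 *
                  (Real.log m + Real.log (Real.log (Real.sinh (2 * R) / Real.sinh τ))) →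
          c * Real.cosh (2 * R) * Real.sqrt ((m : ℝ) / Real.log m)
              ≤ Real.sinh (2 * R) / Real.sinh τ ∧
          Real.sinh (2 * R) / Real.sinh τ
              ≤ C * Real.cosh (2 * R) * Real.sqrt ((m : ℝ) / Real.log m) := by
  obtain ⟨m₀, hm₀⟩ := eventually_atTop.1 eventually_two_le_log_and_mul_log_le
  refine ⟨1 / 40, by norm_num, 1 / 10, by norm_num, m₀, fun m hm R _ hRm τ hτ heq => ?_⟩
  obtain ⟨hlog, hlarge⟩ := hm₀ m hm
  exact sinh_two_mul_div_sinh_bounds hlog hlarge hRm hτ.1 hτ.2 heq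
end
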